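/- arXiv:2211.10124 — 2 statements merged into one kernel-verified Lean document; each statement's English description precedes it below -/
import Mathlib

section
/- Concentration steps monotonically decrease the trimmed objective: let Θ be any type, let n ≥ 1, let ℓ : Θ → Fin n → ℝ, let 1 ≤ h ≤ n, and for θ ∈ Θ define T(θ) as the minimum of Σ_{i∈H} ℓ(θ)(i) over all subsets H ⊆ Fin n of cardinality h. Suppose θ₀, θ₁ ∈ Θ and H₀ ⊆ Fin n is a subset of cardinality h attaining the minimum for θ₀ (i.e., Σ_{i∈H₀} ℓ(θ₀)(i) = T(θ₀)), and suppose θ₁ satisfies Σ_{i∈H₀} ℓ(θ₁)(i) ≤ Σ_{i∈H₀} ℓ(θ₀)(i) (for instance, θ₁ minimizes the loss on the subset H₀). Then T(θ₁) ≤ T(θ₀). -/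
/-- The `h`-trimmed sum of `ℓ : Fin n → ℝ`: the minimum of `∑ i ∈ H, ℓ i` over all
subsets `H ⊆ Fin n` of cardinality `h`. -/
noncomputable def trimmedSum (n h : ℕ) (ℓ : Fin n → ℝ) : ℝ :=
  sInf {s : ℝ | ∃ H : Finset (Fin n), H.card = h ∧ s = ∑ i ∈ H, ℓ i}

lemma trimmedSum_set_finite (n h : ℕ) (ℓ : Fin n → ℝ) :
    {s : ℝ | ∃ H : Finset (Fin n), H.card = h ∧ s = ∑ i ∈ H, ℓ i}.Finite := by
  have : {s : ℝ | ∃ H : Finset (Fin n), H.card = h ∧ s = ∑ i ∈ H, ℓ i} ⊆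
      ↑((Finset.univ.powersetCard h).image fun H => ∑ i ∈ H, ℓ i) := by
    rintro s ⟨H, hc, rfl⟩
    simp only [Finset.coe_image, Set.mem_image, Finset.mem_coe, Finset.mem_powersetCard]
    exact ⟨H, ⟨H.subset_univ, hc⟩, rfl⟩
  exact Set.Finite.subset (Finset.finite_toSet _) this

theorem concentration_step_decreases {Θ : Type*} (n h : ℕ) (hn : 1 ≤ n) (hh : 1 ≤ h)
    (hhn : h ≤ n) (ℓ : Θ → Fin n → ℝ) (θ₀ θ₁ : Θ) (H₀ : Finset (Fin n))
    (hcard : H₀.card = h)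
    (hopt : ∑ i ∈ H₀, ℓ θ₀ i = trimmedSum n h (ℓ θ₀))
    (hstep : ∑ i ∈ H₀, ℓ θ₁ i ≤ ∑ i ∈ H₀, ℓ θ₀ i) :
    trimmedSum n h (ℓ θ₁) ≤ trimmedSum n h (ℓ θ₀) := by
  have h1 : trimmedSum n h (ℓ θ₁) ≤ ∑ i ∈ H₀, ℓ θ₁ i := by
    apply csInf_le ((trimmedSum_set_finite n h (ℓ θ₁)).bddBelow)
    exact ⟨H₀, hcard, rfl⟩
  calc trimmedSum n h (ℓ θ₁) ≤ ∑ i ∈ H₀, ℓ θ₁ i := h1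
    _ ≤ ∑ i ∈ H₀, ℓ θ₀ i := hstep
    _ = trimmedSum n h (ℓ θ₀) := hopt
end

section
/- Trimming at least as many terms as there are contaminated entries bounds the trimmed aggregation independently of the contamination: let n ≥ 1, 1 ≤ h ≤ n, let ℓ, ℓ' : Fin n → ℝ be nonnegative, and let S ⊆ Fin n be a set of cardinality at most n − h such that ℓ'(i) = ℓ(i) for all i ∉ S. Then the h-trimmed sum of ℓ' satisfies T_h(ℓ') ≤ Σ_{i∉S} ℓ(i); in particular this bound does not depend on the values of ℓ' on S. -/
theorem trimmedSum_le_of_contamination (n h : ℕ) (hn : 1 ≤ n) (hh : 1 ≤ h) (hhn : h ≤ n)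
    (ℓ ℓ' : Fin n → ℝ) (hℓ : ∀ i, 0 ≤ ℓ i) (hℓ' : ∀ i, 0 ≤ ℓ' i)
    (S : Finset (Fin n)) (hS : S.card ≤ n - h)
    (hagree : ∀ i ∉ S, ℓ' i = ℓ i) :
    trimmedSum n h ℓ' ≤ ∑ i ∈ Sᶜ, ℓ i := by
  have hcard : h ≤ Sᶜ.card := by
    have : Sᶜ.card = n - S.card := by
      simp [Finset.card_compl]
    omega
  obtain ⟨H, hHsub, hHcard⟩ := Finset.exists_subset_card_eq hcard
  have h1 : trimmedSum n h ℓ' ≤ ∑ i ∈ H, ℓ' i := by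
    apply csInf_le
    · exact ⟨0, fun s ⟨K, _, hs⟩ => hs ▸ Finset.sum_nonneg fun i _ => hℓ' i⟩
    · exact ⟨H, hHcard, rfl⟩
  have h2 : ∑ i ∈ H, ℓ' i = ∑ i ∈ H, ℓ i :=
    Finset.sum_congr rfl fun i hi => hagree i (Finset.mem_compl.mp (hHsub hi))
  have h3 : ∑ i ∈ H, ℓ i ≤ ∑ i ∈ Sᶜ, ℓ i :=
    Finset.sum_le_sum_of_subset_of_nonneg hHsub fun i _ _ => hℓ i
  linarith
end
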